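/- arXiv:2301.00778 — 2 statements merged into one kernel-verified Lean document; each statement's English description precedes it below -/
import Mathlib

section
/- Triangular dependence of the re-expansion map on its parameters (property (tri2) of Lemma 7.2): Fix a multi-index β. Let {π⁽ⁿ⁾}_{n ∈ ℕ²} and {π̂⁽ⁿ⁾}_{n ∈ ℕ²} be two families in ℝ[[z_k,z_n]] satisfying the population condition, whose components agree on all preceding multi-indices: π⁽ⁿ⁾_{β'} = π̂⁽ⁿ⁾_{β'} for every n ∈ ℕ² and every β' ≺ β. Then the associated re-expansion maps satisfy (Γ*)_β^γ = (Γ̂*)_β^γ for every multi-index γ with [γ] ≥ 0. -/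
open MvPowerSeries

noncomputable section

/-- Indices `n ∈ ℕ² \ {(0,0)}` for the variables `z_n`. -/
abbrev Pos2 : Type := {p : ℕ × ℕ // p ≠ (0, 0)}

/-- The variables: `z_k` for `k ∈ ℕ` (left) and `z_n` for `n ∈ ℕ²\{0}` (right). -/
abbrev Var : Type := ℕ ⊕ Pos2

/-- Multi-indices: finitely supported functions from the variables to ℕ. -/
abbrev MIdx : Type := Var →₀ ℕ

/-- The algebra ℝ[[z_k, z_n]] of formal power series. -/
abbrev FPS : Type := MvPowerSeries Var ℝ

/-- The variable `z_k` as a power series. -/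
def zk (k : ℕ) : FPS := MvPowerSeries.X (Sum.inl k)

/-- The variable `z_n` as a power series. -/
def zn (n : Pos2) : FPS := MvPowerSeries.X (Sum.inr n)

/-- The derivation `D⁽⁰⁾ = Σ_k (k+1) z_{k+1} ∂_{z_k}`, defined componentwise by
`(D⁽⁰⁾π)_β = Σ_{k, β(k+1) ≥ 1} (k+1)(β(k)+1) π_{β + e_k - e_{k+1}}`. -/
def Dzero (π : FPS) : FPS := fun β =>
  ∑ j ∈ β.support,
    (match j with
     | Sum.inl (k + 1) =>
         ((k : ℝ) + 1) * ((β (Sum.inl k) : ℝ) + 1) *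
           MvPowerSeries.coeff (R := ℝ)
             (β + Finsupp.single (Sum.inl k) 1 - Finsupp.single (Sum.inl (k + 1)) 1) π
     | _ => 0)

/-- `c ∈ ℝ[[z_k]]`: the subalgebra of series with no `z_n`-dependence. -/
def OnlyZk (c : FPS) : Prop :=
  ∀ β : MIdx, (∃ n : Pos2, β (Sum.inr n) ≠ 0) → MvPowerSeries.coeff (R := ℝ) β c = 0

/-- `[β] := Σ_k k β(k) − Σ_n β(n)`. -/
def bracketZ (β : MIdx) : ℤ :=
  β.sum fun j m => (match j with | Sum.inl k => (k : ℤ) | Sum.inr _ => -1) * (m : ℤ)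

/-- `|β|_p := Σ_n |n| β(n)` where `|n| = n₁ + 2 n₂`. -/
def homP (β : MIdx) : ℝ :=
  β.sum fun j m =>
    (match j with | Sum.inl _ => (0 : ℝ) | Sum.inr n => (n.val.1 : ℝ) + 2 * n.val.2) * (m : ℝ)

/-- The homogeneity `|β| := α (1 + [β]) + |β|_p`. -/
def hom (α : ℝ) (β : MIdx) : ℝ := α * (1 + (bracketZ β : ℝ)) + homP β

/-- `|β|_≺ := |β| + λ β(0)`; the ordering is `γ ≺ β iff |γ|_≺ < |β|_≺`. -/
def ordP (α lam : ℝ) (β : MIdx) : ℝ := hom α β + lam * (β (Sum.inl 0) : ℝ)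

/-- Row-finiteness of a matrix indexed by pairs of multi-indices. -/
def RowFinite (Γ : MIdx → MIdx → ℝ) : Prop := ∀ β : MIdx, {γ : MIdx | Γ β γ ≠ 0}.Finite

/-- The linear map induced componentwise by a (row-finite) matrix. -/
def applyG (Γ : MIdx → MIdx → ℝ) (π : FPS) : FPS := fun β =>
  ∑ᶠ γ : MIdx, Γ β γ * MvPowerSeries.coeff (R := ℝ) γ π

/-- The prescribed image of `z_k`: `Σ_{l≥0} (k+l choose k) q^l z_{k+l}`, defined
componentwise (only finitely many `l` contribute to each component). -/
def gammaZk (q : FPS) (k : ℕ) : FPS := fun β =>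
  ∑ᶠ l : ℕ, (((k + l).choose k : ℝ)) * MvPowerSeries.coeff (R := ℝ) β (q ^ l * zk (k + l))

/-- The population condition `π⁽ⁿ⁾_β = 0 unless |n| < |β|`. -/
def PopCond (α : ℝ) (pin : ℕ × ℕ → FPS) : Prop :=
  ∀ (n : ℕ × ℕ) (β : MIdx),
    MvPowerSeries.coeff (R := ℝ) β (pin n) ≠ 0 → ((n.1 : ℝ) + 2 * n.2) < hom α β

/-- `Γ` is the re-expansion matrix associated to the family `{π⁽ⁿ⁾}_{n ∈ ℕ²}`:
row-finite, the induced map is a unital algebra endomorphism, and it maps the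
coordinates `z_k`, `z_n` as prescribed. -/
def IsReExpansion (pin : ℕ × ℕ → FPS) (Γ : MIdx → MIdx → ℝ) : Prop :=
  RowFinite Γ ∧
  (∀ π π' : FPS, applyG Γ (π * π') = applyG Γ π * applyG Γ π') ∧
  applyG Γ 1 = 1 ∧
  (∀ k : ℕ, applyG Γ (zk k) = gammaZk (pin (0, 0)) k) ∧
  (∀ n : Pos2, applyG Γ (zn n) = zn n + pin n.val)

/-!
Weigh a multi-index by `w(β) = |β|_≺ - α`, which is additive. The population condition gives
every `π⁽ⁿ⁾` weight `≥ -α`, hence `Γ* z_k = Σ_l (k+l choose k) (π⁽⁰⁾)^l z_{k+l}` has weight `≥ α k`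
and `Γ* z_n = z_n + π⁽ⁿ⁾` has weight `≥ -α`, while the agreement hypothesis says that
`π⁽ⁿ⁾ - π̂⁽ⁿ⁾` has weight `≥ w(β)`. So each difference `Γ* z_j - Γ̂* z_j` lies `w(β) + α` above the
bound for `Γ* z_j`, and this relative gap survives products. Therefore `Γ* z^γ - Γ̂* z^γ` has
weight `≥ w(β) + α + α [γ] > w(β)` when `[γ] ≥ 0`, so its `β`-coefficient
`(Γ*)_β^γ - (Γ̂*)_β^γ` vanishes.
-/

namespace MvPowerSeries

variable {σ R : Type*} [CommRing R] (w : (σ →₀ ℕ) →+ ℝ)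

def WeightGE (c : ℝ) (f : MvPowerSeries σ R) : Prop :=
  ∀ d, coeff d f ≠ 0 → c ≤ w d

structure WeightClose (a t : ℝ) (f g : MvPowerSeries σ R) : Prop where
  left : WeightGE w a f
  right : WeightGE w a g
  sub : WeightGE w (t + a) (f - g)

variable {w}

theorem WeightGE.mono {c c' : ℝ} {f : MvPowerSeries σ R} (h : WeightGE w c f) (hc : c' ≤ c) :
    WeightGE w c' f :=
  fun d hd => hc.trans (h d hd)

theorem weightGE_zero (c : ℝ) : WeightGE w c (0 : MvPowerSeries σ R) :=
  fun d hd => absurd (map_zero (coeff d)) hd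

theorem weightGE_one : WeightGE w 0 (1 : MvPowerSeries σ R) := by
  classical
  intro d hd
  obtain rfl : d = 0 := by by_contra h; exact hd (by simp [coeff_one, h])
  simp

theorem weightGE_X {c : ℝ} {i : σ} (hc : c ≤ w (Finsupp.single i 1)) :
    WeightGE w c (X i : MvPowerSeries σ R) := by
  classical
  intro d hd
  obtain rfl : d = Finsupp.single i 1 := by by_contra h; exact hd (by simp [coeff_X, h])
  exact hc

theorem WeightGE.add {c : ℝ} {f g : MvPowerSeries σ R} (hf : WeightGE w c f)
    (hg : WeightGE w c g) : WeightGE w c (f + g) := by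
  intro d hd
  by_cases h : coeff d f = 0
  · exact hg d (by simpa [h] using hd)
  · exact hf d h

theorem WeightGE.mul {a b : ℝ} {f g : MvPowerSeries σ R} (hf : WeightGE w a f)
    (hg : WeightGE w b g) : WeightGE w (a + b) (f * g) := by
  classical
  intro d hd
  rw [coeff_mul] at hd
  obtain ⟨p, hp, hne⟩ := Finset.exists_ne_zero_of_sum_ne_zero hd
  rw [Finset.HasAntidiagonal.mem_antidiagonal] at hp
  rw [← hp, map_add]
  exact add_le_add (hf _ (left_ne_zero_of_mul hne)) (hg _ (right_ne_zero_of_mul hne))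

theorem weightGE_sub_iff {c : ℝ} {f g : MvPowerSeries σ R} :
    WeightGE w c (f - g) ↔ ∀ d, w d < c → coeff d f = coeff d g := by
  simp only [WeightGE, map_sub, sub_ne_zero]
  exact forall_congr' fun d => by rw [← not_imp_not, not_le, not_not]

namespace WeightClose

variable {a b t : ℝ} {f g f' g' : MvPowerSeries σ R}

theorem of_weightGE (h : WeightGE w a f) : WeightClose w a t f f :=
  ⟨h, h, by rw [sub_self]; exact weightGE_zero _⟩

theorem mono (h : WeightClose w a t f g) {a' : ℝ} (ha : a' ≤ a) : WeightClose w a' t f g :=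
  ⟨h.left.mono ha, h.right.mono ha, h.sub.mono (by linarith)⟩

theorem coeff_eq (h : WeightClose w a t f g) {d : σ →₀ ℕ} (hd : w d < t + a) :
    coeff d f = coeff d g :=
  weightGE_sub_iff.1 h.sub d hd

theorem mul (h : WeightClose w a t f g) (h' : WeightClose w b t f' g') :
    WeightClose w (a + b) t (f * f') (g * g') where
  left := h.left.mul h'.left
  right := h.right.mul h'.right
  sub := by
    rw [show f * f' - g * g' = (f - g) * f' + g * (f' - g') by ring]
    exact ((h.sub.mul h'.left).mono (by linarith)).add ((h.right.mul h'.sub).mono (by linarith))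

theorem pow (h : WeightClose w a t f g) (m : ℕ) : WeightClose w (m * a) t (f ^ m) (g ^ m) := by
  induction m with
  | zero => simpa using of_weightGE weightGE_one
  | succ m ih => simpa [pow_succ, add_mul] using ih.mul h

theorem prod {ι : Type*} (s : Finset ι) {a : ι → ℝ} {f g : ι → MvPowerSeries σ R}
    (h : ∀ i ∈ s, WeightClose w (a i) t (f i) (g i)) :
    WeightClose w (∑ i ∈ s, a i) t (∏ i ∈ s, f i) (∏ i ∈ s, g i) := by
  classical
  induction s using Finset.induction_on with
  | empty => simpa using of_weightGE weightGE_one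
  | insert i s hi ih =>
    simp only [Finset.sum_insert hi, Finset.prod_insert hi]
    exact (h i (Finset.mem_insert_self i s)).mul
      (ih fun j hj => h j (Finset.mem_insert_of_mem hj))

theorem finsuppProd {a : σ → ℝ} {f g : σ → MvPowerSeries σ R} (e : σ →₀ ℕ)
    (h : ∀ i ∈ e.support, WeightClose w (a i) t (f i) (g i)) :
    WeightClose w (Finsupp.weight a e) t (e.prod fun i m => f i ^ m)
      (e.prod fun i m => g i ^ m) := by
  simpa [Finsupp.weight_apply, Finsupp.sum, Finsupp.prod] using
    prod e.support fun i hi => (h i hi).pow (e i)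

theorem of_coeff_eq_finsum {ι : Type*} {F G : MvPowerSeries σ R} {f g : ι → MvPowerSeries σ R}
    (c : ι → R) (hF : ∀ d, coeff d F = ∑ᶠ i, c i * coeff d (f i))
    (hG : ∀ d, coeff d G = ∑ᶠ i, c i * coeff d (g i))
    (h : ∀ i, WeightClose w a t (f i) (g i)) : WeightClose w a t F G := by
  have weightGE_of_finsum : ∀ {H : MvPowerSeries σ R} {h : ι → MvPowerSeries σ R},
      (∀ d, coeff d H = ∑ᶠ i, c i * coeff d (h i)) → (∀ i, WeightGE w a (h i)) →
      WeightGE w a H := by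
    intro H h hH hh d hd
    rw [hH] at hd
    obtain ⟨i, hi⟩ : ∃ i, c i * coeff d (h i) ≠ 0 := by
      by_contra! hall
      exact hd (by simp [hall])
    exact hh i d (right_ne_zero_of_mul hi)
  refine ⟨weightGE_of_finsum hF fun i => (h i).left, weightGE_of_finsum hG fun i => (h i).right, ?_⟩
  refine weightGE_sub_iff.2 fun d hd => ?_
  rw [hF, hG]
  exact finsum_congr fun i => by rw [(h i).coeff_eq hd]

end WeightClose

end MvPowerSeries

def varWeight (α lam : ℝ) : Var → ℝ
  | Sum.inl k => α * k + if k = 0 then lam else 0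
  | Sum.inr n => (n.val.1 : ℝ) + 2 * n.val.2 - α

abbrev orderWeight (α lam : ℝ) : MIdx →+ ℝ := Finsupp.weight (varWeight α lam)

theorem ordP_eq_add_orderWeight (α lam : ℝ) (β : MIdx) :
    ordP α lam β = α + orderWeight α lam β := by
  have hβ0 : (β (Sum.inl 0) : ℝ) = ∑ j ∈ β.support, if j = Sum.inl 0 then (β j : ℝ) else 0 := by
    rw [Finset.sum_ite_eq']
    split_ifs with h
    · rfl
    · simp [Finsupp.notMem_support_iff.1 h]
  simp only [ordP, hom, bracketZ, homP, Finsupp.weight_apply, Finsupp.sum, hβ0]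
  push_cast
  rw [mul_add, mul_one, add_assoc, add_assoc]
  simp only [Finset.mul_sum, ← Finset.sum_add_distrib]
  congr 1
  refine Finset.sum_congr rfl fun j _ => ?_
  rcases j with (_ | k) | n <;> simp [varWeight] <;> ring

def varBracket : Var → ℝ
  | Sum.inl k => k
  | Sum.inr _ => -1

theorem weight_mul_varBracket (α : ℝ) (γ : MIdx) :
    Finsupp.weight (fun j => α * varBracket j) γ = α * bracketZ γ := by
  simp only [bracketZ, Finsupp.weight_apply, Finsupp.sum, Int.cast_sum, Finset.mul_sum]
  refine Finset.sum_congr rfl fun j _ => ?_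
  rcases j with k | n <;> simp [varBracket] <;> ring

theorem coeff_applyG_monomial_one (Γ : MIdx → MIdx → ℝ) (β γ : MIdx) :
    coeff β (applyG Γ (monomial γ 1)) = Γ β γ := by
  classical
  change ∑ᶠ δ, Γ β δ * coeff δ (monomial γ (1 : ℝ)) = Γ β γ
  rw [finsum_eq_single _ γ fun δ hδ => by rw [coeff_monomial, if_neg hδ, mul_zero],
    coeff_monomial_same, mul_one]

theorem IsReExpansion.applyG_monomial_one {pin : ℕ × ℕ → FPS} {Γ : MIdx → MIdx → ℝ}
    (hΓ : IsReExpansion pin Γ) (γ : MIdx) :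
    applyG Γ (monomial γ 1) = γ.prod fun j m => applyG Γ (X j) ^ m := by
  obtain ⟨-, hmul, hone, -⟩ := hΓ
  let φ : FPS →* FPS := { toFun := applyG Γ, map_one' := hone, map_mul' := hmul }
  rw [monomial_one_eq]
  exact (map_finsuppProd φ _ _).trans (by simp only [map_pow]; rfl)

section Weights

variable {α lam : ℝ}

theorem weightGE_zk (hlam : 0 ≤ lam) (k : ℕ) : WeightGE (orderWeight α lam) (α * k) (zk k) :=
  weightGE_X (by simp [Finsupp.weight_single, varWeight]; split_ifs <;> linarith)

theorem weightGE_zn (n : Pos2) : WeightGE (orderWeight α lam) (-α) (zn n) :=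
  weightGE_X (by simp [Finsupp.weight_single, varWeight]; positivity)

theorem PopCond.weightGE {pin : ℕ × ℕ → FPS} (hpop : PopCond α pin) (hlam : 0 ≤ lam)
    (n : ℕ × ℕ) : WeightGE (orderWeight α lam) (-α) (pin n) := by
  intro d hd
  have hlt := hpop n d hd
  have hord := ordP_eq_add_orderWeight α lam d
  simp only [ordP] at hord
  have : 0 ≤ lam * (d (Sum.inl 0) : ℝ) := by positivity
  linarith [show (0 : ℝ) ≤ n.1 + 2 * n.2 by positivity]

theorem weightClose_pin (hlam : 0 ≤ lam) {β : MIdx} {pin pinh : ℕ × ℕ → FPS}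
    (hpop : PopCond α pin) (hpoph : PopCond α pinh)
    (hagree : ∀ (n : ℕ × ℕ) (β' : MIdx), ordP α lam β' < ordP α lam β →
      coeff β' (pin n) = coeff β' (pinh n))
    (n : ℕ × ℕ) :
    WeightClose (orderWeight α lam) (-α) (orderWeight α lam β + α) (pin n) (pinh n) :=
  ⟨hpop.weightGE hlam n, hpoph.weightGE hlam n, weightGE_sub_iff.2 fun d hd =>
    hagree n d (by rw [ordP_eq_add_orderWeight, ordP_eq_add_orderWeight]; linarith)⟩

theorem weightClose_gammaZk {t : ℝ} {q qh : FPS} (hlam : 0 ≤ lam)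
    (hq : WeightClose (orderWeight α lam) (-α) t q qh) (k : ℕ) :
    WeightClose (orderWeight α lam) (α * k) t (gammaZk q k) (gammaZk qh k) :=
  WeightClose.of_coeff_eq_finsum (fun l => ((k + l).choose k : ℝ)) (fun _ => rfl) (fun _ => rfl)
    fun l => ((hq.pow l).mul (WeightClose.of_weightGE (weightGE_zk hlam (k + l)))).mono
      (le_of_eq (by push_cast; ring))

theorem weightClose_zn_add {t : ℝ} {p ph : FPS}
    (hp : WeightClose (orderWeight α lam) (-α) t p ph) (n : Pos2) :
    WeightClose (orderWeight α lam) (-α) t (zn n + p) (zn n + ph) :=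
  ⟨(weightGE_zn n).add hp.left, (weightGE_zn n).add hp.right, by
    rw [add_sub_add_left_eq_sub]; exact hp.sub⟩

theorem IsReExpansion.weightClose_applyG_X (hlam : 0 ≤ lam) {t : ℝ} {pin pinh : ℕ × ℕ → FPS}
    {Γ Γh : MIdx → MIdx → ℝ} (hΓ : IsReExpansion pin Γ) (hΓh : IsReExpansion pinh Γh)
    (hpin : ∀ n, WeightClose (orderWeight α lam) (-α) t (pin n) (pinh n)) (j : Var) :
    WeightClose (orderWeight α lam) (α * varBracket j) t (applyG Γ (X j)) (applyG Γh (X j)) := by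
  obtain ⟨-, -, -, hzk, hzn⟩ := hΓ
  obtain ⟨-, -, -, hzkh, hznh⟩ := hΓh
  rcases j with k | n
  · rw [← zk, hzk, hzkh]
    exact weightClose_gammaZk hlam (hpin (0, 0)) k
  · rw [← zn, hzn, hznh]
    exact (weightClose_zn_add (hpin n) n).mono (le_of_eq (by simp [varBracket]))

end Weights

theorem stmt_16_general (α lam : ℝ) (hα0 : 0 < α) (hlam0 : 0 < lam)
    (β : MIdx) (pin pinh : ℕ × ℕ → FPS) (hpop : PopCond α pin) (hpoph : PopCond α pinh)
    (hagree : ∀ (n : ℕ × ℕ) (β' : MIdx), ordP α lam β' < ordP α lam β →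
      MvPowerSeries.coeff (R := ℝ) β' (pin n) = MvPowerSeries.coeff (R := ℝ) β' (pinh n))
    (Γ Γh : MIdx → MIdx → ℝ) (hΓ : IsReExpansion pin Γ) (hΓh : IsReExpansion pinh Γh) :
    ∀ γ : MIdx, 0 ≤ bracketZ γ → Γ β γ = Γh β γ := by
  intro γ hγ
  have hX := hΓ.weightClose_applyG_X hlam0.le hΓh (weightClose_pin hlam0.le hpop hpoph hagree)
  rw [← coeff_applyG_monomial_one Γ, ← coeff_applyG_monomial_one Γh, hΓ.applyG_monomial_one,
    hΓh.applyG_monomial_one]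
  refine (WeightClose.finsuppProd γ fun j _ => hX j).coeff_eq ?_
  rw [weight_mul_varBracket]
  have : (0 : ℝ) ≤ bracketZ γ := by exact_mod_cast hγ
  nlinarith

/-- Triangular dependence of the re-expansion map on its parameters (property (tri2)):
if two families agree on all components indexed by multi-indices `β' ≺ β`, then the
associated re-expansion matrices agree in row `β` on all columns `γ` with `[γ] ≥ 0`. -/
theorem stmt_16 (α lam : ℝ) (hα0 : 0 < α) (hα1 : α < 1) (hlam0 : 0 < lam) (hlam : lam < α)
    (β : MIdx) (pin pinh : ℕ × ℕ → FPS) (hpop : PopCond α pin) (hpoph : PopCond α pinh)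
    (hagree : ∀ (n : ℕ × ℕ) (β' : MIdx), ordP α lam β' < ordP α lam β →
      MvPowerSeries.coeff (R := ℝ) β' (pin n) = MvPowerSeries.coeff (R := ℝ) β' (pinh n))
    (Γ Γh : MIdx → MIdx → ℝ) (hΓ : IsReExpansion pin Γ) (hΓh : IsReExpansion pinh Γh) :
    ∀ γ : MIdx, 0 ≤ bracketZ γ → Γ β γ = Γh β γ :=
  stmt_16_general α lam hα0 hlam0 β pin pinh hpop hpoph hagree Γ Γh hΓ hΓh
end
end

section
/- Intertwining of π⁻ with the re-expansion map (identity (cw28)): Let q ∈ ℝ[[z_k,z_n]] and let Γ* be any row-finite unital algebra endomorphism of ℝ[[z_k,z_n]] (i.e. a linear map induced componentwise by a matrix ((Γ*)_β^γ) with, for each β, only finitely many γ such that (Γ*)_β^γ ≠ 0, which is multiplicative and fixes 𝟙) satisfying Γ* z_k = Σ_{l≥0} (k+l choose k) q^l z_{k+l} for every k ∈ ℕ. Then for all π, π'' ∈ ℝ[[z_k,z_n]], c ∈ ℝ[[z_k]] and ξ ∈ ℝ, one has Γ*(π⁻(π, π'', c, ξ)) = π⁻(Γ*π + q, Γ*π'',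 c, ξ), where π⁻(π,π'',c,ξ) := Σ_{k≥0} z_k π^k π'' − Σ_{l≥0} (1/l!) π^l (D⁽⁰⁾)^l c + ξ 𝟙. -/
open MvPowerSeries

noncomputable section

/-- `π⁻ := Σ_{k≥0} z_k π^k π'' − Σ_{l≥0} (1/l!) π^l (D⁽⁰⁾)^l c + ξ 𝟙`, defined
componentwise (all sums are componentwise finite). -/
def piminus (π π'' c : FPS) (ξ : ℝ) : FPS := fun β =>
  (∑ᶠ k : ℕ, MvPowerSeries.coeff (R := ℝ) β (zk k * π ^ k * π''))
    - (∑ᶠ l : ℕ, ((l.factorial : ℝ))⁻¹ * MvPowerSeries.coeff (R := ℝ) β (π ^ l * Dzero^[l] c))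
    + ξ * MvPowerSeries.coeff (R := ℝ) β 1

/-!
All infinite sums here are coefficientwise finite (`CoeffFinite`, `coeffSum`), and a row-finite
`Γ*` commutes with them, as do `D⁽⁰⁾` and multiplication.

The heart of the matter is that on `ℝ[[z_k]]` the map `Γ*` agrees with
`E_q c = Σ_m q^m/m! (D⁽⁰⁾)^m c`. Writing `D⁽⁰⁾ = Σ_k (k+1) z_{k+1} ∂_{z_k}` exhibits it as a
derivation, so the Leibniz rule makes `E_q` multiplicative; `(D⁽⁰⁾)^m z_k = (k+m)!/k! z_{k+m}`
gives `E_q z_k = Γ* z_k`; hence the two algebra maps agree on monomials in the `z_k` and, both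
commuting with coefficientwise sums, on all of `ℝ[[z_k]]`. The sums over `m` are finite because
`D⁽⁰⁾` lowers the weight `Σ_k k β(k)` by one.

With this, both sums in `π⁻` collapse by the binomial theorem:
`Σ_{k,l} (k+l choose k) z_{k+l} q^l (Γ*π)^k = Σ_m z_m (Γ*π + q)^m` and
`Σ_{l,m} (Γ*π)^l q^m (D⁽⁰⁾)^{l+m} c / (l! m!) = Σ_n (Γ*π + q)^n (D⁽⁰⁾)^n c / n!`,
the second because `Γ*((D⁽⁰⁾)^l c) = E_q((D⁽⁰⁾)^l c)`, `D⁽⁰⁾` preserving `ℝ[[z_k]]`.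
-/

-- `_root_` since `open MvPowerSeries` makes `Finset` ambiguous; the hidden
-- `Finset.antidiagonal` is the one for Hahn series.
open _root_.Finset hiding antidiagonal mem_antidiagonal
open _root_.Finset.HasAntidiagonal

lemma finsum_eq_finsum_sum_antidiagonal {M : Type*} [AddCommMonoid M] (a : ℕ × ℕ → M)
    (ha : (Function.support a).Finite) :
    ∑ᶠ p, a p = ∑ᶠ m, ∑ p ∈ antidiagonal m, a p := by
  classical
  set s := ha.toFinset
  have hfiber (m : ℕ) : ∑ p ∈ antidiagonal m, a p = ∑ p ∈ s with p.1 + p.2 = m, a p := by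
    refine (sum_subset (fun p hp => mem_antidiagonal.2 (mem_filter.1 hp).2) fun p hp hps => ?_).symm
    by_contra hne
    exact hps (mem_filter.2 ⟨ha.mem_toFinset.2 hne, mem_antidiagonal.1 hp⟩)
  simp only [hfiber]
  rw [finsum_eq_sum_of_support_subset _ (s := s.image fun p => p.1 + p.2) fun m hm => by
      obtain ⟨p, hp, -⟩ := exists_ne_zero_of_sum_ne_zero hm
      exact mem_coe.2 (mem_image.2 ⟨p, (mem_filter.1 hp).1, (mem_filter.1 hp).2⟩),
    sum_fiberwise_of_maps_to fun p hp => mem_image_of_mem _ hp]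
  exact finsum_eq_sum_of_support_subset _ ha.coe_toFinset.ge

lemma sum_antidiagonal_inv_factorial_smul {M : Type*} [AddCommMonoid M] [Module ℝ M] (n : ℕ)
    (x : ℕ × ℕ → M) :
    ∑ p ∈ antidiagonal n, ((p.1.factorial : ℝ)⁻¹ * (p.2.factorial : ℝ)⁻¹) • x p =
      (n.factorial : ℝ)⁻¹ • ∑ p ∈ antidiagonal n, n.choose p.1 • x p := by
  rw [smul_sum]
  refine sum_congr rfl fun p hp => ?_
  rw [← mem_antidiagonal.1 hp, ← Nat.cast_smul_eq_nsmul ℝ, smul_smul]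
  congr 1
  have h : ((p.1 + p.2).choose p.1 * p.1.factorial * p.2.factorial : ℝ) =
      (p.1 + p.2).factorial := by
    exact_mod_cast Nat.choose_symm_add ▸ Nat.add_choose_mul_factorial_mul_factorial p.1 p.2
  field_simp
  linarith

theorem Derivation.iterate_leibniz {R A : Type*} [CommSemiring R] [CommSemiring A] [Algebra R A]
    (D : Derivation R A A) (n : ℕ) (a b : A) :
    D^[n] (a * b) = ∑ ij ∈ antidiagonal n, n.choose ij.1 • (D^[ij.1] a * D^[ij.2] b) := by
  induction n with
  | zero => simp
  | succ n ih =>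
    rw [sum_antidiagonal_choose_succ_nsmul (fun i j => D^[i] a * D^[j] b) n]
    simp only [Function.iterate_succ_apply', ih, map_sum, map_nsmul, Derivation.leibniz,
      smul_eq_mul, smul_add, sum_add_distrib]
    congr 1
    refine sum_congr rfl fun ij hij => ?_
    rw [n.choose_symm_of_eq_add (mem_antidiagonal.1 hij).symm, mul_comm]

section CoeffSum

variable {σ R ι κ : Type*} [CommSemiring R]

def CoeffFinite (f : ι → MvPowerSeries σ R) : Prop :=
  ∀ n : σ →₀ ℕ, {i | coeff n (f i) ≠ 0}.Finite

def coeffSum (f : ι → MvPowerSeries σ R) : MvPowerSeries σ R :=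
  fun n => ∑ᶠ i, coeff n (f i)

lemma coeff_coeffSum (f : ι → MvPowerSeries σ R) (n : σ →₀ ℕ) :
    coeff n (coeffSum f) = ∑ᶠ i, coeff n (f i) := rfl

lemma exists_coeff_ne_zero_of_coeff_mul_ne_zero [DecidableEq σ] {φ ψ : MvPowerSeries σ R}
    {n : σ →₀ ℕ} (h : coeff n (φ * ψ) ≠ 0) :
    ∃ p ∈ antidiagonal n, coeff p.1 φ ≠ 0 ∧ coeff p.2 ψ ≠ 0 := by
  rw [coeff_mul] at h
  obtain ⟨p, hp, hne⟩ := exists_ne_zero_of_sum_ne_zero h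
  exact ⟨p, hp, left_ne_zero_of_mul hne, right_ne_zero_of_mul hne⟩

lemma coeffFinite_monomial_coeff (φ : MvPowerSeries σ R) :
    CoeffFinite fun n => monomial n (coeff n φ) :=
  fun n => (Set.finite_singleton n).subset fun _ hm => (eq_of_coeff_monomial_ne_zero hm).symm

lemma coeffSum_monomial_coeff (φ : MvPowerSeries σ R) :
    coeffSum (fun n => monomial n (coeff n φ)) = φ := by
  ext n
  rw [coeff_coeffSum, finsum_eq_single _ n fun m hm => coeff_monomial_ne (Ne.symm hm) _,
    coeff_monomial_same]

lemma CoeffFinite.smul {f : ι → MvPowerSeries σ R} (hf : CoeffFinite f) (r : ι → R) :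
    CoeffFinite fun i => r i • f i :=
  fun n => (hf n).subset fun i hi => by
    simp only [Set.mem_ofPred_eq, map_smul, smul_eq_mul] at hi ⊢
    exact right_ne_zero_of_mul hi

lemma CoeffFinite.mul_left {f : ι → MvPowerSeries σ R} (hf : CoeffFinite f)
    (g : MvPowerSeries σ R) : CoeffFinite fun i => g * f i := by
  classical
  exact fun n => ((antidiagonal n).finite_toSet.biUnion fun p _ => hf p.2).subset fun _ hi =>
    let ⟨p, hp, _, hne⟩ := exists_coeff_ne_zero_of_coeff_mul_ne_zero hi
    Set.mem_biUnion hp hne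

lemma CoeffFinite.mul {f : ι → MvPowerSeries σ R} {g : κ → MvPowerSeries σ R}
    (hf : CoeffFinite f) (hg : CoeffFinite g) : CoeffFinite fun p : ι × κ => f p.1 * g p.2 := by
  classical
  exact fun n => ((antidiagonal n).finite_toSet.biUnion fun p _ => (hf p.1).prod (hg p.2)).subset
    fun _ hi =>
      let ⟨p, hp, hne⟩ := exists_coeff_ne_zero_of_coeff_mul_ne_zero hi
      Set.mem_biUnion hp hne

lemma coeff_X_mul [DecidableEq σ] (s : σ) (φ : MvPowerSeries σ R) (n : σ →₀ ℕ) :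
    coeff n (X s * φ) = if n s = 0 then 0 else coeff (n - Finsupp.single s 1) φ := by
  rw [X_def, coeff_monomial_mul, one_mul]
  by_cases h : n s = 0 <;> simp [h, Finsupp.single_le_iff, Nat.one_le_iff_ne_zero]

lemma CoeffFinite.X_mul (v : ι → σ) (hv : ∀ s, (v ⁻¹' {s}).Finite)
    (f : ι → MvPowerSeries σ R) : CoeffFinite fun i => X (v i) * f i := by
  classical
  refine fun n => (n.support.finite_toSet.preimage' fun s _ => hv s).subset fun i hi => ?_
  rw [Set.mem_ofPred_eq, coeff_X_mul] at hi
  exact Finsupp.mem_support_iff.2 fun h => hi (if_pos h)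

lemma coeffSum_add {f g : ι → MvPowerSeries σ R} (hf : CoeffFinite f) (hg : CoeffFinite g) :
    coeffSum (fun i => f i + g i) = coeffSum f + coeffSum g := by
  ext n
  simp only [coeff_coeffSum, map_add]
  exact finsum_add_distrib (hf n) (hg n)

lemma mul_coeffSum {f : ι → MvPowerSeries σ R} (hf : CoeffFinite f) (g : MvPowerSeries σ R) :
    g * coeffSum f = coeffSum fun i => g * f i := by
  classical
  ext n
  simp only [coeff_coeffSum, coeff_mul]
  rw [← sum_finsum_comm _ _ fun p _ => (hf p.2).subset fun i hi =>
    right_ne_zero_of_mul (Function.mem_support.1 hi)]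
  exact sum_congr rfl fun p _ => mul_finsum' _ _ (hf p.2)

lemma coeffSum_mul {f : ι → MvPowerSeries σ R} (hf : CoeffFinite f) (g : MvPowerSeries σ R) :
    coeffSum f * g = coeffSum fun i => f i * g := by
  simp only [mul_comm _ g, mul_coeffSum hf]

lemma smul_coeffSum {f : ι → MvPowerSeries σ R} (hf : CoeffFinite f) (r : R) :
    r • coeffSum f = coeffSum fun i => r • f i := by
  simp only [smul_eq_C_mul, mul_coeffSum hf]

lemma coeffSum_coeffSum {F : ι → κ → MvPowerSeries σ R}
    (hF : CoeffFinite fun p : ι × κ => F p.1 p.2) :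
    coeffSum (fun i => coeffSum (F i)) = coeffSum fun p : ι × κ => F p.1 p.2 := by
  ext n
  exact (finsum_curry _ (hF n)).symm

lemma coeffSum_comm {F : ι → κ → MvPowerSeries σ R}
    (hF : CoeffFinite fun p : ι × κ => F p.1 p.2) :
    coeffSum (fun i => coeffSum (F i)) = coeffSum fun j => coeffSum fun i => F i j := by
  have hF' : CoeffFinite fun p : κ × ι => F p.2 p.1 :=
    fun n => (hF n).preimage (Equiv.prodComm κ ι).injective.injOn
  rw [coeffSum_coeffSum hF, coeffSum_coeffSum hF']
  ext n
  exact (finsum_comp_equiv (Equiv.prodComm κ ι)).symm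

lemma coeffSum_eq_coeffSum_sum_antidiagonal {F : ℕ × ℕ → MvPowerSeries σ R}
    (hF : CoeffFinite F) : coeffSum F = coeffSum fun m => ∑ p ∈ antidiagonal m, F p := by
  ext n
  simp only [coeff_coeffSum, map_sum]
  exact finsum_eq_finsum_sum_antidiagonal _ (hF n)

lemma coeffSum_mul_coeffSum {f : ι → MvPowerSeries σ R} {g : κ → MvPowerSeries σ R}
    (hf : CoeffFinite f) (hg : CoeffFinite g) :
    coeffSum f * coeffSum g = coeffSum fun p : ι × κ => f p.1 * g p.2 := by
  rw [coeffSum_mul hf]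
  simp only [mul_coeffSum hg]
  exact coeffSum_coeffSum (hf.mul hg)

lemma coeffSum_eq_single {f : ι → MvPowerSeries σ R} (j : ι) (hf : ∀ i ≠ j, f i = 0) :
    coeffSum f = f j := by
  ext n
  exact finsum_eq_single _ j fun i hi => by rw [hf i hi, map_zero]

def coeffSumDerivation (D : ι → Derivation R (MvPowerSeries σ R) (MvPowerSeries σ R))
    (hD : ∀ φ, CoeffFinite fun i => D i φ) :
    Derivation R (MvPowerSeries σ R) (MvPowerSeries σ R) where
  toFun φ := coeffSum fun i => D i φ
  map_add' φ ψ := by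
    simp only [map_add]
    exact coeffSum_add (hD φ) (hD ψ)
  map_smul' r φ := by
    simp only [Derivation.map_smul, RingHom.id_apply]
    exact (smul_coeffSum (hD φ) r).symm
  map_one_eq_zero' := by
    ext n
    simp [coeff_coeffSum]
  leibniz' φ ψ := by
    simp only [LinearMap.coe_mk, AddHom.coe_mk, Derivation.leibniz, smul_eq_mul]
    rw [coeffSum_add ((hD ψ).mul_left φ) ((hD φ).mul_left ψ), mul_coeffSum (hD ψ),
      mul_coeffSum (hD φ)]

lemma coeffSumDerivation_apply (D : ι → Derivation R (MvPowerSeries σ R) (MvPowerSeries σ R))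
    (hD : ∀ φ, CoeffFinite fun i => D i φ) (φ : MvPowerSeries σ R) :
    coeffSumDerivation D hD φ = coeffSum fun i => D i φ := rfl

end CoeffSum

section RowFinite

variable {ι : Type*} {Γ : MIdx → MIdx → ℝ}

lemma coeff_applyG (hrow : RowFinite Γ) (π : FPS) (β : MIdx) :
    coeff β (applyG Γ π) = ∑ γ ∈ (hrow β).toFinset, Γ β γ * coeff γ π :=
  finsum_eq_sum_of_support_subset _ fun _ hγ =>
    (hrow β).mem_toFinset.2 (left_ne_zero_of_mul (Function.mem_support.1 hγ))

def applyGLinearMap (hrow : RowFinite Γ) : FPS →ₗ[ℝ] FPS where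
  toFun := applyG Γ
  map_add' a b := by
    ext β
    simp only [coeff_applyG hrow, map_add, mul_add, sum_add_distrib]
  map_smul' r a := by
    ext β
    simp only [coeff_applyG hrow, map_smul, smul_eq_mul, mul_sum, RingHom.id_apply, mul_left_comm]

def applyGAlgHom (hrow : RowFinite Γ)
    (hmul : ∀ π π' : FPS, applyG Γ (π * π') = applyG Γ π * applyG Γ π')
    (hone : applyG Γ 1 = 1) : FPS →ₐ[ℝ] FPS :=
  AlgHom.ofLinearMap (applyGLinearMap hrow) hone hmul

lemma applyGAlgHom_apply (hrow : RowFinite Γ)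
    (hmul : ∀ π π' : FPS, applyG Γ (π * π') = applyG Γ π * applyG Γ π')
    (hone : applyG Γ 1 = 1) (π : FPS) : applyGAlgHom hrow hmul hone π = applyG Γ π := rfl

lemma applyG_coeffSum (hrow : RowFinite Γ) {f : ι → FPS} (hf : CoeffFinite f) :
    applyG Γ (coeffSum f) = coeffSum fun i => applyG Γ (f i) := by
  ext β
  simp only [coeff_applyG hrow, coeff_coeffSum]
  rw [← sum_finsum_comm _ _ fun γ _ => (hf γ).subset fun i hi =>
    right_ne_zero_of_mul (Function.mem_support.1 hi)]
  exact sum_congr rfl fun γ _ => mul_finsum' _ _ (hf γ)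

end RowFinite

def succSupport (β : MIdx) : Finset ℕ :=
  β.support.preimage (fun k => Sum.inl (k + 1)) fun _ _ _ _ h => by simpa using h

lemma mem_succSupport {β : MIdx} {k : ℕ} : k ∈ succSupport β ↔ β (Sum.inl (k + 1)) ≠ 0 :=
  mem_preimage.trans Finsupp.mem_support_iff

lemma coeff_Dzero (π : FPS) (β : MIdx) :
    coeff β (Dzero π) = ∑ k ∈ succSupport β, ((k : ℝ) + 1) * ((β (Sum.inl k) : ℝ) + 1) *
      coeff (β + Finsupp.single (Sum.inl k) 1 - Finsupp.single (Sum.inl (k + 1)) 1) π :=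
  (sum_preimage (fun k : ℕ => (Sum.inl (k + 1) : Var)) β.support _ _ fun j _ hj => by
    rcases j with (_ | k) | n
    · rfl
    · exact absurd ⟨k, rfl⟩ hj
    · rfl).symm

lemma coeffFinite_zk_mul {ι : Type*} (v : ι → ℕ) (hv : ∀ k, (v ⁻¹' {k}).Finite)
    (f : ι → FPS) : CoeffFinite fun i => zk (v i) * f i := by
  refine CoeffFinite.X_mul (fun i => Sum.inl (v i)) (fun s => ?_) f
  rcases s with k | n
  · exact (hv k).subset fun _ hi => Sum.inl_injective hi
  · exact Set.finite_empty.subset fun _ hi => Sum.inl_ne_inr hi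

def dzeroDerivation : Derivation ℝ FPS FPS :=
  coeffSumDerivation
    (fun k : ℕ => zk (k + 1) • ((k : ℝ) + 1) • pderiv ℝ (Sum.inl k : Var))
    fun φ => coeffFinite_zk_mul (· + 1)
      (fun _ => (Set.subsingleton_singleton.preimage (add_left_injective 1)).finite)
      fun k => ((k : ℝ) + 1) • pderiv ℝ (Sum.inl k : Var) φ

lemma dzeroDerivation_apply (φ : FPS) : dzeroDerivation φ = Dzero φ := by
  classical
  ext β
  rw [dzeroDerivation, coeffSumDerivation_apply, coeff_coeffSum, coeff_Dzero]
  simp only [Derivation.smul_apply, smul_eq_mul, zk]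
  rw [finsum_eq_sum_of_support_subset _ (s := succSupport β) fun k hk => ?_]
  · refine sum_congr rfl fun k hk => ?_
    have hk := mem_succSupport.1 hk
    rw [coeff_X_mul, if_neg hk, map_smul, coeff_pderiv, smul_eq_mul,
      tsub_add_eq_add_tsub (Finsupp.single_le_iff.2 (Nat.one_le_iff_ne_zero.2 hk))]
    simp only [Finsupp.coe_tsub, Pi.sub_apply, ne_eq, Sum.inl.injEq, Nat.left_eq_add, one_ne_zero,
      not_false_eq_true, Finsupp.single_eq_of_ne, tsub_zero]
    ring
  · rw [Function.mem_support, coeff_X_mul] at hk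
    exact mem_coe.2 (mem_succSupport.2 fun h => hk (if_pos h))

lemma coe_dzeroDerivation : ⇑dzeroDerivation = Dzero := funext dzeroDerivation_apply

lemma Dzero_iterate_mul (a b : FPS) (n : ℕ) :
    Dzero^[n] (a * b) =
      ∑ ij ∈ antidiagonal n, n.choose ij.1 • (Dzero^[ij.1] a * Dzero^[ij.2] b) := by
  rw [← coe_dzeroDerivation]
  exact dzeroDerivation.iterate_leibniz n a b

lemma Dzero_one : Dzero 1 = 0 := by
  rw [← coe_dzeroDerivation]
  exact dzeroDerivation.map_one_eq_zero

lemma Dzero_smul (r : ℝ) (φ : FPS) : Dzero (r • φ) = r • Dzero φ := by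
  rw [← coe_dzeroDerivation]
  exact dzeroDerivation.map_smul r φ

lemma Dzero_zk (j : ℕ) : Dzero (zk j) = ((j : ℝ) + 1) • zk (j + 1) := by
  rw [← dzeroDerivation_apply, dzeroDerivation, coeffSumDerivation_apply,
    coeffSum_eq_single j fun k hk => ?_]
  · simp only [zk, Derivation.smul_apply, pderiv_X_self, smul_eq_mul, Algebra.mul_smul_comm,
      mul_one]
  · simp only [zk, Derivation.smul_apply, pderiv_X_of_ne (Sum.inl_injective.ne (Ne.symm hk)),
      smul_zero, smul_eq_mul, mul_zero]

lemma Dzero_iterate_zk (k m : ℕ) :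
    Dzero^[m] (zk k) = ((k + m).descFactorial m : ℝ) • zk (k + m) := by
  induction m with
  | zero => simp
  | succ m ih =>
    rw [Function.iterate_succ_apply', ih, Dzero_smul, Dzero_zk, smul_smul, ← add_assoc,
      Nat.succ_descFactorial_succ]
    push_cast
    module

section Summation

variable {ι : Type*} {f : ι → FPS}

lemma CoeffFinite.comp_Dzero (hf : CoeffFinite f) : CoeffFinite fun i => Dzero (f i) := fun β =>
  ((succSupport β).finite_toSet.biUnion fun _ _ => hf _).subset fun i hi => by
    rw [Set.mem_ofPred_eq, coeff_Dzero] at hi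
    obtain ⟨k, hk, hne⟩ := exists_ne_zero_of_sum_ne_zero hi
    exact Set.mem_biUnion hk (right_ne_zero_of_mul hne)

lemma Dzero_coeffSum (hf : CoeffFinite f) :
    Dzero (coeffSum f) = coeffSum fun i => Dzero (f i) := by
  ext β
  simp only [coeff_Dzero, coeff_coeffSum]
  rw [← sum_finsum_comm _ _ fun _ _ => (hf _).subset fun i hi =>
    right_ne_zero_of_mul (Function.mem_support.1 hi)]
  exact sum_congr rfl fun _ _ => mul_finsum' _ _ (hf _)

lemma CoeffFinite.comp_Dzero_iterate (hf : CoeffFinite f) (m : ℕ) :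
    CoeffFinite fun i => Dzero^[m] (f i) := by
  induction m with
  | zero => exact hf
  | succ m ih => simpa only [Function.iterate_succ_apply'] using ih.comp_Dzero

lemma Dzero_iterate_coeffSum (hf : CoeffFinite f) (m : ℕ) :
    Dzero^[m] (coeffSum f) = coeffSum fun i => Dzero^[m] (f i) := by
  induction m with
  | zero => rfl
  | succ m ih =>
    simp only [Function.iterate_succ_apply', ih, Dzero_coeffSum (hf.comp_Dzero_iterate m)]

end Summation

def zkWeight : MIdx →+ ℕ := Finsupp.weight (Sum.elim (fun k => k) 0)

lemma zkWeight_single_inl (k : ℕ) : zkWeight (Finsupp.single (Sum.inl k) 1) = k := by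
  simp [zkWeight, Finsupp.weight_single]

lemma zkWeight_shift {β : MIdx} {k : ℕ} (hk : β (Sum.inl (k + 1)) ≠ 0) :
    zkWeight (β + Finsupp.single (Sum.inl k) 1 - Finsupp.single (Sum.inl (k + 1)) 1) + 1 =
      zkWeight β := by
  have hle : Finsupp.single (Sum.inl (k + 1)) 1 ≤ β + Finsupp.single (Sum.inl k) 1 :=
    Finsupp.single_le_iff.2 (by simpa using Nat.one_le_iff_ne_zero.2 hk)
  have h := congrArg zkWeight (tsub_add_cancel_of_le hle)
  rw [map_add, map_add, zkWeight_single_inl, zkWeight_single_inl] at h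
  omega

lemma exists_of_coeff_Dzero_ne_zero {c : FPS} {β : MIdx} (h : coeff β (Dzero c) ≠ 0) :
    ∃ γ : MIdx, zkWeight γ + 1 = zkWeight β ∧
      (∀ n : Pos2, γ (Sum.inr n) = β (Sum.inr n)) ∧ coeff γ c ≠ 0 := by
  rw [coeff_Dzero] at h
  obtain ⟨k, hk, hne⟩ := exists_ne_zero_of_sum_ne_zero h
  exact ⟨_, zkWeight_shift (mem_succSupport.1 hk), fun n => by simp, right_ne_zero_of_mul hne⟩

lemma exists_of_coeff_Dzero_iterate_ne_zero {c : FPS} {β : MIdx} (m : ℕ)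
    (h : coeff β (Dzero^[m] c) ≠ 0) :
    ∃ γ : MIdx, zkWeight γ + m = zkWeight β ∧
      (∀ n : Pos2, γ (Sum.inr n) = β (Sum.inr n)) ∧ coeff γ c ≠ 0 := by
  induction m generalizing β with
  | zero => exact ⟨β, rfl, fun _ => rfl, h⟩
  | succ m ih =>
    rw [Function.iterate_succ_apply'] at h
    obtain ⟨δ, hδ, hδn, hne⟩ := exists_of_coeff_Dzero_ne_zero h
    obtain ⟨γ, hγ, hγn, hc⟩ := ih hne
    exact ⟨γ, by omega, fun n => (hγn n).trans (hδn n), hc⟩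

lemma OnlyZk.Dzero_iterate {c : FPS} (hc : OnlyZk c) (m : ℕ) : OnlyZk (Dzero^[m] c) :=
  fun β ⟨n, hn⟩ => by
    by_contra h
    obtain ⟨γ, -, hγn, hγ⟩ := exists_of_coeff_Dzero_iterate_ne_zero m h
    exact hγ (hc γ ⟨n, by rwa [hγn n]⟩)

lemma coeff_mul_Dzero_iterate_eq_zero (g c : FPS) {m : ℕ} {β : MIdx} (h : zkWeight β < m) :
    coeff β (g * Dzero^[m] c) = 0 := by
  classical
  by_contra hne
  obtain ⟨p, hp, -, hp2⟩ := exists_coeff_ne_zero_of_coeff_mul_ne_zero hne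
  obtain ⟨γ, hγ, -⟩ := exists_of_coeff_Dzero_iterate_ne_zero m hp2
  have := congrArg zkWeight (mem_antidiagonal.1 hp)
  rw [map_add] at this
  omega

lemma coeffFinite_smul_mul_Dzero_iterate (r : ℕ → ℝ) (g : ℕ → FPS) (c : FPS) :
    CoeffFinite fun m => r m • (g m * Dzero^[m] c) := fun β =>
  (Set.finite_Iic (zkWeight β)).subset fun m hm => by
    by_contra h
    exact hm (by rw [map_smul, coeff_mul_Dzero_iterate_eq_zero _ _ (not_le.1 h), smul_zero])

section ExpDzero

variable (q : FPS)

def expDzero (c : FPS) : FPS :=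
  coeffSum fun m : ℕ => (m.factorial : ℝ)⁻¹ • (q ^ m * Dzero^[m] c)

lemma coeffFinite_expDzero (c : FPS) :
    CoeffFinite fun m : ℕ => (m.factorial : ℝ)⁻¹ • (q ^ m * Dzero^[m] c) :=
  coeffFinite_smul_mul_Dzero_iterate _ _ c

lemma expDzero_add (a b : FPS) : expDzero q (a + b) = expDzero q a + expDzero q b := by
  unfold expDzero
  rw [← coeffSum_add (coeffFinite_expDzero q a) (coeffFinite_expDzero q b)]
  simp only [← coe_dzeroDerivation, iterate_map_add, mul_add, smul_add]

lemma expDzero_smul (r : ℝ) (a : FPS) : expDzero q (r • a) = r • expDzero q a := by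
  unfold expDzero
  rw [smul_coeffSum (coeffFinite_expDzero q a)]
  have hcomm : Function.Commute Dzero (r • ·) := Dzero_smul r
  simp only [hcomm.iterate_left _ a, mul_smul_comm, smul_comm r]

lemma expDzero_one : expDzero q 1 = 1 := by
  rw [expDzero, coeffSum_eq_single 0 fun m hm => ?_]
  · simp
  · obtain ⟨m, rfl⟩ := Nat.exists_eq_succ_of_ne_zero hm
    rw [Function.iterate_succ_apply, Dzero_one, ← coe_dzeroDerivation, iterate_map_zero,
      mul_zero, smul_zero]

lemma expDzero_mul (a b : FPS) : expDzero q (a * b) = expDzero q a * expDzero q b := by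
  unfold expDzero
  rw [coeffSum_mul_coeffSum (coeffFinite_expDzero q a) (coeffFinite_expDzero q b),
    coeffSum_eq_coeffSum_sum_antidiagonal
      ((coeffFinite_expDzero q a).mul (coeffFinite_expDzero q b))]
  congr 1
  ext1 n
  have hterm : ∀ p ∈ antidiagonal n,
      (p.1.factorial : ℝ)⁻¹ • (q ^ p.1 * Dzero^[p.1] a) *
        (p.2.factorial : ℝ)⁻¹ • (q ^ p.2 * Dzero^[p.2] b) =
      ((p.1.factorial : ℝ)⁻¹ * (p.2.factorial : ℝ)⁻¹) •
        (q ^ n * (Dzero^[p.1] a * Dzero^[p.2] b)) := fun p hp => by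
    rw [smul_mul_smul_comm, ← mem_antidiagonal.1 hp, pow_add]
    ring_nf
  rw [sum_congr rfl hterm, sum_antidiagonal_inv_factorial_smul, Dzero_iterate_mul, mul_sum]
  simp only [mul_smul_comm]

lemma expDzero_zk (k : ℕ) : expDzero q (zk k) = gammaZk q k := by
  ext β
  refine finsum_congr fun m => ?_
  dsimp only
  rw [Dzero_iterate_zk, mul_smul_comm, smul_smul, map_smul, smul_eq_mul,
    Nat.descFactorial_eq_factorial_mul_choose, add_comm k m, Nat.choose_symm_add]
  push_cast
  rw [← mul_assoc, inv_mul_cancel₀ (by positivity), one_mul]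

def expDzeroAlgHom : FPS →ₐ[ℝ] FPS :=
  AlgHom.ofLinearMap
    { toFun := expDzero q, map_add' := expDzero_add q, map_smul' := expDzero_smul q }
    (expDzero_one q) (expDzero_mul q)

lemma expDzeroAlgHom_apply (c : FPS) : expDzeroAlgHom q c = expDzero q c := rfl

lemma expDzero_coeffSum {ι : Type*} {f : ι → FPS} (hf : CoeffFinite f) :
    expDzero q (coeffSum f) = coeffSum fun i => expDzero q (f i) := by
  have hfam (m : ℕ) :
      CoeffFinite fun i => (m.factorial : ℝ)⁻¹ • (q ^ m * Dzero^[m] (f i)) :=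
    ((hf.comp_Dzero_iterate m).mul_left _).smul _
  have hjoint : CoeffFinite fun p : ℕ × ι =>
      (p.1.factorial : ℝ)⁻¹ • (q ^ p.1 * Dzero^[p.1] (f p.2)) := fun β =>
    ((Set.finite_Iic (zkWeight β)).biUnion fun m _ =>
      (Set.finite_singleton m).prod (hfam m β)).subset fun p hp => by
        refine Set.mem_biUnion (x := p.1) ?_ ⟨rfl, hp⟩
        by_contra h
        exact hp (by rw [map_smul, coeff_mul_Dzero_iterate_eq_zero _ _ (not_le.1 h), smul_zero])
  simp only [expDzero, Dzero_iterate_coeffSum hf, mul_coeffSum (hf.comp_Dzero_iterate _),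
    smul_coeffSum ((hf.comp_Dzero_iterate _).mul_left _)]
  exact coeffSum_comm hjoint

end ExpDzero

lemma piminus_eq_coeffSum (π π'' c : FPS) (ξ : ℝ) :
    piminus π π'' c ξ =
      coeffSum (fun k : ℕ => zk k * π ^ k * π'') -
        coeffSum (fun l : ℕ => (l.factorial : ℝ)⁻¹ • (π ^ l * Dzero^[l] c)) +
        ξ • 1 := by
  ext β
  simp only [map_add, map_sub, map_smul, coeff_coeffSum, smul_eq_mul]
  rfl

lemma gammaZk_eq_coeffSum (q : FPS) (k : ℕ) :
    gammaZk q k = coeffSum fun l : ℕ => zk (k + l) * ((k + l).choose k • q ^ l) := by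
  ext β
  refine finsum_congr fun l => ?_
  dsimp only
  rw [mul_smul_comm, map_nsmul, nsmul_eq_mul, mul_comm (zk _)]

section ReExpansion

variable {q : FPS} {Γ : MIdx → MIdx → ℝ}

lemma applyG_monomial_eq_expDzero (hrow : RowFinite Γ)
    (hmul : ∀ π π' : FPS, applyG Γ (π * π') = applyG Γ π * applyG Γ π')
    (hone : applyG Γ 1 = 1) (hzk : ∀ k : ℕ, applyG Γ (zk k) = gammaZk q k)
    {γ : MIdx} (hγ : ∀ n : Pos2, γ (Sum.inr n) = 0) :
    applyG Γ (monomial γ 1) = expDzero q (monomial γ 1) := by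
  induction γ using Finsupp.induction with
  | zero => rw [monomial_zero_one, hone, expDzero_one]
  | single_add j e τ _ he ih =>
    rcases j with k | n
    · have hτ : ∀ n : Pos2, τ (Sum.inr n) = 0 := fun n => by simpa using hγ n
      have hsplit : monomial (Finsupp.single (Sum.inl k) e + τ) (1 : ℝ) =
          zk k ^ e * monomial τ 1 := by
        rw [zk, X_pow_eq, monomial_mul_monomial, one_mul]
      simp only [hsplit, ← applyGAlgHom_apply hrow hmul hone, ← expDzeroAlgHom_apply, map_mul,
        map_pow]
      simp only [applyGAlgHom_apply, expDzeroAlgHom_apply, hzk, expDzero_zk, ih hτ]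
    · exact absurd (by simpa using hγ n : e = 0 ∧ _).1 he

lemma applyG_eq_expDzero (hrow : RowFinite Γ)
    (hmul : ∀ π π' : FPS, applyG Γ (π * π') = applyG Γ π * applyG Γ π')
    (hone : applyG Γ 1 = 1) (hzk : ∀ k : ℕ, applyG Γ (zk k) = gammaZk q k)
    {c : FPS} (hc : OnlyZk c) : applyG Γ c = expDzero q c := by
  rw [← coeffSum_monomial_coeff c, applyG_coeffSum hrow (coeffFinite_monomial_coeff c),
    expDzero_coeffSum q (coeffFinite_monomial_coeff c)]
  congr 1
  ext1 γ
  have hmono : monomial γ (coeff γ c) = coeff γ c • monomial γ (1 : ℝ) := by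
    rw [← map_smul, smul_eq_mul, mul_one]
  by_cases h : coeff γ c = 0
  · rw [hmono, h, zero_smul, ← applyGAlgHom_apply hrow hmul hone, ← expDzeroAlgHom_apply,
      map_zero, map_zero]
  · have hγ : ∀ n : Pos2, γ (Sum.inr n) = 0 := fun n => by
      by_contra hn
      exact h (hc γ ⟨n, hn⟩)
    rw [hmono, ← applyGAlgHom_apply hrow hmul hone, ← expDzeroAlgHom_apply, map_smul, map_smul,
      applyGAlgHom_apply, expDzeroAlgHom_apply,
      applyG_monomial_eq_expDzero hrow hmul hone hzk hγ]

lemma applyG_coeffSum_zk_mul (hrow : RowFinite Γ)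
    (hmul : ∀ π π' : FPS, applyG Γ (π * π') = applyG Γ π * applyG Γ π')
    (hone : applyG Γ 1 = 1) (hzk : ∀ k : ℕ, applyG Γ (zk k) = gammaZk q k) (π π'' : FPS) :
    applyG Γ (coeffSum fun k : ℕ => zk k * π ^ k * π'') =
      coeffSum fun m : ℕ => zk m * (applyG Γ π + q) ^ m * applyG Γ π'' := by
  have hfin : CoeffFinite fun k : ℕ => zk k * π ^ k * π'' := by
    simpa only [mul_assoc] using
      coeffFinite_zk_mul (fun k => k) Set.finite_singleton fun k => π ^ k * π''
  have hpair : CoeffFinite fun p : ℕ × ℕ =>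
      zk (p.1 + p.2) * ((p.1 + p.2).choose p.1 • q ^ p.2) *
        (applyG Γ π ^ p.1 * applyG Γ π'') := by
    simpa only [mul_assoc] using coeffFinite_zk_mul (fun p : ℕ × ℕ => p.1 + p.2)
      (fun m => (antidiagonal m).finite_toSet.subset fun p hp => mem_antidiagonal.2 hp) _
  have hterm (k : ℕ) : applyG Γ (zk k * π ^ k * π'') =
      coeffSum fun l =>
        zk (k + l) * ((k + l).choose k • q ^ l) * (applyG Γ π ^ k * applyG Γ π'') := by
    rw [← applyGAlgHom_apply hrow hmul hone, map_mul, map_mul, map_pow]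
    simp only [applyGAlgHom_apply]
    rw [hzk, gammaZk_eq_coeffSum, mul_assoc, coeffSum_mul]
    exact coeffFinite_zk_mul (k + ·) (fun _ =>
      (Set.subsingleton_singleton.preimage (add_right_injective k)).finite) _
  rw [applyG_coeffSum hrow hfin]
  simp only [hterm]
  rw [coeffSum_coeffSum hpair, coeffSum_eq_coeffSum_sum_antidiagonal hpair]
  congr 1
  ext1 m
  rw [(Commute.all _ _).add_pow', mul_sum, sum_mul]
  refine sum_congr rfl fun p hp => ?_
  rw [← mem_antidiagonal.1 hp]
  simp only [nsmul_eq_mul]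
  ring

lemma applyG_coeffSum_Dzero_iterate (hrow : RowFinite Γ)
    (hmul : ∀ π π' : FPS, applyG Γ (π * π') = applyG Γ π * applyG Γ π')
    (hone : applyG Γ 1 = 1) (hzk : ∀ k : ℕ, applyG Γ (zk k) = gammaZk q k) (π : FPS)
    {c : FPS} (hc : OnlyZk c) :
    applyG Γ (coeffSum fun l : ℕ => (l.factorial : ℝ)⁻¹ • (π ^ l * Dzero^[l] c)) =
      coeffSum fun n : ℕ =>
        (n.factorial : ℝ)⁻¹ • ((applyG Γ π + q) ^ n * Dzero^[n] c) := by
  have hpair : CoeffFinite fun p : ℕ × ℕ =>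
      ((p.1.factorial : ℝ)⁻¹ * (p.2.factorial : ℝ)⁻¹) •
        (applyG Γ π ^ p.1 * q ^ p.2 * Dzero^[p.1 + p.2] c) := fun β =>
    ((Set.finite_Iic (zkWeight β)).prod (Set.finite_Iic (zkWeight β))).subset fun p hp => by
      have hle : p.1 + p.2 ≤ zkWeight β := by
        by_contra h
        exact hp (by rw [map_smul, coeff_mul_Dzero_iterate_eq_zero _ _ (not_le.1 h), smul_zero])
      exact ⟨Set.mem_Iic.2 (by omega), Set.mem_Iic.2 (by omega)⟩
  have hterm (l : ℕ) : applyG Γ ((l.factorial : ℝ)⁻¹ • (π ^ l * Dzero^[l] c)) =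
      coeffSum fun m => ((l.factorial : ℝ)⁻¹ * (m.factorial : ℝ)⁻¹) •
        (applyG Γ π ^ l * q ^ m * Dzero^[l + m] c) := by
    rw [← applyGAlgHom_apply hrow hmul hone, map_smul, map_mul, map_pow]
    simp only [applyGAlgHom_apply]
    rw [applyG_eq_expDzero hrow hmul hone hzk (hc.Dzero_iterate l), expDzero,
      mul_coeffSum (coeffFinite_expDzero q _),
      smul_coeffSum ((coeffFinite_expDzero q _).mul_left _)]
    congr 1
    ext1 m
    rw [mul_smul_comm, smul_smul, add_comm l m, Function.iterate_add_apply, mul_assoc]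
  rw [applyG_coeffSum hrow (coeffFinite_smul_mul_Dzero_iterate _ _ c)]
  simp only [hterm]
  rw [coeffSum_coeffSum hpair, coeffSum_eq_coeffSum_sum_antidiagonal hpair]
  congr 1
  ext1 n
  rw [sum_congr rfl fun p hp => by rw [mem_antidiagonal.1 hp], sum_antidiagonal_inv_factorial_smul,
    (Commute.all _ _).add_pow', sum_mul]
  simp only [smul_mul_assoc]

end ReExpansion

/-- Intertwining of `π⁻` with the re-expansion map (identity (cw28)):
`Γ*(π⁻(π, π'', c, ξ)) = π⁻(Γ*π + q, Γ*π'', c, ξ)`. -/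
theorem stmt_18 (q : FPS) (Γ : MIdx → MIdx → ℝ) (hrow : RowFinite Γ)
    (hmul : ∀ π π' : FPS, applyG Γ (π * π') = applyG Γ π * applyG Γ π')
    (hone : applyG Γ 1 = 1)
    (hzk : ∀ k : ℕ, applyG Γ (zk k) = gammaZk q k)
    (π π'' c : FPS) (hc : OnlyZk c) (ξ : ℝ) :
    applyG Γ (piminus π π'' c ξ) = piminus (applyG Γ π + q) (applyG Γ π'') c ξ := by
  rw [piminus_eq_coeffSum, piminus_eq_coeffSum, ← applyG_coeffSum_zk_mul hrow hmul hone hzk,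
    ← applyG_coeffSum_Dzero_iterate hrow hmul hone hzk π hc]
  simp only [← applyGAlgHom_apply hrow hmul hone, map_add, map_sub, map_smul, map_one]
end
end
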